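/- arXiv:1310.5155 — 4 statements merged into one kernel-verified Lean document; each statement's English description precedes it below -/
import Mathlib

section
/- Let H be a complex Hilbert space of dimension at least 2 and fix q with 0 < q ≤ 1. Then for every bounded linear operator A on H, (q/2)·‖A‖ ≤ r_q(A) ≤ ‖A‖, where ‖A‖ is the operator norm. In particular the q-numerical radius is a norm on the bounded operators, equivalent to the operator norm. -/
/-!
For a unit vector `x`, choose a unit vector `z ⟂ x` (possible since `dim H ≥ 2`) and put
`y = q x ± √(1 - q²) z`. Then `⟨x, y⟩ = q`, and for one of the two signs
`|⟨A x, y⟩| ≥ q |⟨A x, x⟩|`, because `2‖a‖ ≤ ‖a + b‖ + ‖a - b‖`. Hence `r_q(A) ≥ q w(A)` for the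
numerical radius `w(A)`, and the complex polarization identity gives `‖A‖ ≤ 2 w(A)`.
The upper bound `r_q(A) ≤ ‖A‖` is Cauchy–Schwarz.
-/

noncomputable section

/-- The `q`-numerical radius on a complex Hilbert space `E`.  The paper's inner product
`⟨·,·⟩` is linear in the first argument, while Mathlib's `inner x y` is linear in `y`;
hence the paper's `⟨x, y⟩` is `inner y x` below. -/
def rqE {E : Type*} [NormedAddCommGroup E] [InnerProductSpace ℂ E] (q : ℝ) (A : E →L[ℂ] E) :
    ℝ :=
  sSup { r : ℝ | ∃ x y : E, ‖x‖ = 1 ∧ ‖y‖ = 1 ∧ (inner ℂ y x : ℂ) = (q : ℂ) ∧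
    r = ‖(inner ℂ y (A x) : ℂ)‖ }

open scoped InnerProductSpace

theorem norm_le_max_norm_add_norm_sub {F : Type*} [SeminormedAddCommGroup F] [NormedSpace ℝ F]
    (a b : F) : ‖a‖ ≤ max ‖a + b‖ ‖a - b‖ := by
  have h : 2 * ‖a‖ ≤ ‖a + b‖ + ‖a - b‖ := by
    have := norm_add_le (a + b) (a - b)
    rwa [add_add_sub_cancel, ← two_smul ℝ, norm_smul, Real.norm_two] at this
  linarith [le_max_left ‖a + b‖ ‖a - b‖, le_max_right ‖a + b‖ ‖a - b‖]

section RCLike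

variable {𝕜 E : Type*} [RCLike 𝕜] [NormedAddCommGroup E] [InnerProductSpace 𝕜 E]

theorem exists_norm_eq_one_inner_eq_zero (hdim : 2 ≤ Module.rank 𝕜 E) (x : E) :
    ∃ z : E, ‖z‖ = 1 ∧ ⟪x, z⟫_𝕜 = 0 := by
  have hne : (𝕜 ∙ x)ᗮ ≠ ⊥ := by
    rw [Ne, Submodule.orthogonal_eq_bot_iff]
    intro htop
    have : Module.rank 𝕜 E ≤ 1 := by
      rw [← rank_top 𝕜 E, ← htop]
      exact (rank_span_le _).trans (by simp)
    exact absurd (hdim.trans this) (by norm_num)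
  obtain ⟨v, hv, hv0⟩ := (Submodule.ne_bot_iff _).mp hne
  exact ⟨(‖v‖⁻¹ : 𝕜) • v, norm_smul_inv_norm hv0, by
    rw [inner_smul_right,
      Submodule.inner_right_of_mem_orthogonal (Submodule.mem_span_singleton_self x) hv, mul_zero]⟩

theorem norm_ofReal_smul_add_ofReal_smul {x z : E} (hx : ‖x‖ = 1) (hz : ‖z‖ = 1)
    (hxz : ⟪x, z⟫_𝕜 = 0) {a b : ℝ} (hab : a ^ 2 + b ^ 2 = 1) :
    ‖(a : 𝕜) • x + (b : 𝕜) • z‖ = 1 := by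
  have h := norm_add_sq_eq_norm_sq_add_norm_sq_of_inner_eq_zero ((a : 𝕜) • x) ((b : 𝕜) • z)
    (by rw [inner_smul_left, inner_smul_right, hxz, mul_zero, mul_zero])
  simp only [norm_smul, RCLike.norm_ofReal, hx, hz, mul_one] at h
  rw [← pow_eq_one_iff_of_nonneg (norm_nonneg _) two_ne_zero, sq, h]
  nlinarith [sq_abs a, sq_abs b]

theorem exists_inner_eq_and_abs_mul_norm_inner_le {q : ℝ} (hq : |q| ≤ 1) {x z : E}
    (hx : ‖x‖ = 1) (hz : ‖z‖ = 1) (hxz : ⟪x, z⟫_𝕜 = 0) (w : E) :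
    ∃ y : E, ‖y‖ = 1 ∧ ⟪y, x⟫_𝕜 = q ∧ |q| * ‖⟪x, w⟫_𝕜‖ ≤ ‖⟪y, w⟫_𝕜‖ := by
  set c := √(1 - q ^ 2)
  have hqc : ∀ b : ℝ, b ^ 2 = c ^ 2 → q ^ 2 + b ^ 2 = 1 := fun b hb => by
    rw [hb, Real.sq_sqrt (by nlinarith [sq_abs q, abs_nonneg q])]; ring
  have hzx : ⟪z, x⟫_𝕜 = 0 := inner_eq_zero_symm.mp hxz
  have hy : ∀ b : ℝ, ⟪(q : 𝕜) • x + (b : 𝕜) • z, x⟫_𝕜 = q ∧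
      ⟪(q : 𝕜) • x + (b : 𝕜) • z, w⟫_𝕜 = q * ⟪x, w⟫_𝕜 + b * ⟪z, w⟫_𝕜 := fun b => by
    simp [inner_add_left, inner_smul_left, hzx, inner_self_eq_norm_sq_to_K, hx]
  have hmax := norm_le_max_norm_add_norm_sub ((q : 𝕜) * ⟪x, w⟫_𝕜) ((c : 𝕜) * ⟪z, w⟫_𝕜)
  rw [norm_mul, RCLike.norm_ofReal] at hmax
  rcases le_max_iff.mp hmax with h | h
  · exact ⟨_, norm_ofReal_smul_add_ofReal_smul hx hz hxz (hqc c rfl), (hy c).1,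
      by rwa [(hy c).2]⟩
  · refine ⟨_, norm_ofReal_smul_add_ofReal_smul hx hz hxz (hqc (-c) (neg_sq c)), (hy (-c)).1, ?_⟩
    rwa [(hy (-c)).2, RCLike.ofReal_neg, neg_mul, ← sub_eq_add_neg]

theorem ContinuousLinearMap.norm_inner_self_le_of_norm_eq_one (A : E →L[𝕜] E) {W : ℝ}
    (h : ∀ u : E, ‖u‖ = 1 → ‖⟪u, A u⟫_𝕜‖ ≤ W) (u : E) :
    ‖⟪u, A u⟫_𝕜‖ ≤ W * ‖u‖ ^ 2 := by
  rcases eq_or_ne u 0 with rfl | hu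
  · simp
  have := h _ (norm_smul_inv_norm (𝕜 := 𝕜) hu)
  rw [map_smul, inner_smul_left, inner_smul_right, norm_mul, norm_mul, RCLike.norm_conj,
    norm_inv, RCLike.norm_ofReal, abs_norm, ← mul_assoc, ← sq, inv_pow,
    inv_mul_le_iff₀ (by positivity)] at this
  linarith

theorem ContinuousLinearMap.norm_inner_apply_le_opNorm (A : E →L[𝕜] E) {x y : E}
    (hx : ‖x‖ = 1) (hy : ‖y‖ = 1) : ‖⟪y, A x⟫_𝕜‖ ≤ ‖A‖ :=
  calc ‖⟪y, A x⟫_𝕜‖ ≤ ‖y‖ * ‖A x‖ := norm_inner_le_norm _ _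
    _ ≤ ‖A‖ := by simpa [hx, hy] using A.le_opNorm x

end RCLike

section Complex

variable {V : Type*} [NormedAddCommGroup V] [InnerProductSpace ℂ V]

theorem ContinuousLinearMap.norm_inner_map_le_of_norm_inner_self_le (A : V →L[ℂ] V) {W : ℝ}
    (h : ∀ u : V, ‖⟪u, A u⟫_ℂ‖ ≤ W * ‖u‖ ^ 2) (x y : V) :
    ‖⟪A y, x⟫_ℂ‖ ≤ W * (‖x‖ ^ 2 + ‖y‖ ^ 2) := by
  have h' : ∀ u : V, ‖⟪A u, u⟫_ℂ‖ ≤ W * ‖u‖ ^ 2 := fun u => by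
    rw [← inner_conj_symm, RCLike.norm_conj]; exact h u
  have triangle : ∀ a b c d : ℂ,
      ‖a - b + Complex.I * c - Complex.I * d‖ ≤ ‖a‖ + ‖b‖ + ‖c‖ + ‖d‖ := fun a b c d =>
    calc _ ≤ ‖a - b‖ + ‖Complex.I * c‖ + ‖Complex.I * d‖ :=
          (norm_sub_le _ _).trans (by gcongr; exact norm_add_le _ _)
      _ ≤ _ := by simpa [norm_mul] using norm_sub_le a b
  have hpar := parallelogram_law_with_norm ℂ x y
  have hpar' := parallelogram_law_with_norm ℂ x (Complex.I • y)
  rw [norm_smul, Complex.norm_I, one_mul] at hpar'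
  have key := inner_map_polarization (A : V →ₗ[ℂ] V) x y
  simp only [ContinuousLinearMap.coe_coe] at key
  rw [key, norm_div, Complex.norm_ofNat, div_le_iff₀ four_pos]
  refine (triangle _ _ _ _).trans ?_
  linear_combination h' (x + y) + h' (x - y) + h' (x + Complex.I • y) + h' (x - Complex.I • y) +
    W * hpar + W * hpar'

theorem ContinuousLinearMap.opNorm_le_two_mul_of_norm_inner_self_le (A : V →L[ℂ] V) {W : ℝ}
    (hW : 0 ≤ W) (h : ∀ u : V, ‖⟪u, A u⟫_ℂ‖ ≤ W * ‖u‖ ^ 2) : ‖A‖ ≤ 2 * W := by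
  refine A.opNorm_le_of_unit_norm (by positivity) fun v hv => ?_
  rcases eq_or_ne (A v) 0 with hAv | hAv
  · rw [hAv, norm_zero]; positivity
  have hunit : ‖(‖A v‖⁻¹ : ℂ) • A v‖ = 1 := norm_smul_inv_norm hAv
  have hinner : ⟪A v, (‖A v‖⁻¹ : ℂ) • A v⟫_ℂ = ‖A v‖ := by simp [sq, hAv]
  have := A.norm_inner_map_le_of_norm_inner_self_le h ((‖A v‖⁻¹ : ℂ) • A v) v
  rw [hinner, Complex.norm_real, norm_norm, hunit, hv] at this
  linarith

end Complex

section NumericalRadius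

variable {E : Type*} [NormedAddCommGroup E] [InnerProductSpace ℂ E]

theorem rqE_nonneg (q : ℝ) (A : E →L[ℂ] E) : 0 ≤ rqE q A :=
  Real.sSup_nonneg <| by rintro _ ⟨x, y, -, -, -, rfl⟩; exact norm_nonneg _

theorem rqE_le_opNorm (q : ℝ) (A : E →L[ℂ] E) : rqE q A ≤ ‖A‖ :=
  Real.sSup_le (by rintro _ ⟨x, y, hx, hy, -, rfl⟩; exact A.norm_inner_apply_le_opNorm hx hy)
    (norm_nonneg A)

theorem norm_inner_le_rqE {q : ℝ} (A : E →L[ℂ] E) {x y : E} (hx : ‖x‖ = 1) (hy : ‖y‖ = 1)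
    (hyx : ⟪y, x⟫_ℂ = q) : ‖⟪y, A x⟫_ℂ‖ ≤ rqE q A := by
  refine le_csSup ⟨‖A‖, ?_⟩ ⟨x, y, hx, hy, hyx, rfl⟩
  rintro _ ⟨x, y, hx, hy, -, rfl⟩
  exact A.norm_inner_apply_le_opNorm hx hy

theorem mul_norm_inner_self_le_rqE (hdim : 2 ≤ Module.rank ℂ E) {q : ℝ} (hq0 : 0 ≤ q)
    (hq1 : q ≤ 1) (A : E →L[ℂ] E) {x : E} (hx : ‖x‖ = 1) :
    q * ‖⟪x, A x⟫_ℂ‖ ≤ rqE q A := by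
  obtain ⟨z, hz, hxz⟩ := exists_norm_eq_one_inner_eq_zero hdim x
  obtain ⟨y, hy, hyx, hle⟩ := exists_inner_eq_and_abs_mul_norm_inner_le
    (abs_le.mpr ⟨by linarith, hq1⟩) hx hz hxz (A x)
  rw [abs_of_nonneg hq0] at hle
  exact hle.trans (norm_inner_le_rqE A hx hy hyx)

end NumericalRadius

theorem statement3_general {E : Type*} [NormedAddCommGroup E] [InnerProductSpace ℂ E]
    (hdim : 2 ≤ Module.rank ℂ E)
    (q : ℝ) (hq0 : 0 < q) (hq1 : q ≤ 1) (A : E →L[ℂ] E) :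
    (q / 2) * ‖A‖ ≤ rqE q A ∧ rqE q A ≤ ‖A‖ := by
  have hdiag : ∀ u : E, ‖u‖ = 1 → ‖⟪u, A u⟫_ℂ‖ ≤ rqE q A / q := fun u hu =>
    (le_div_iff₀' hq0).2 (mul_norm_inner_self_le_rqE hdim hq0.le hq1 A hu)
  have hA : ‖A‖ ≤ 2 * (rqE q A / q) :=
    A.opNorm_le_two_mul_of_norm_inner_self_le (div_nonneg (rqE_nonneg q A) hq0.le)
      (A.norm_inner_self_le_of_norm_eq_one hdiag)
  refine ⟨?_, rqE_le_opNorm q A⟩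
  calc q / 2 * ‖A‖ ≤ q / 2 * (2 * (rqE q A / q)) := by gcongr
    _ = rqE q A := by field_simp

/-- On a complex Hilbert space of dimension at least `2`, for `0 < q ≤ 1`,
`(q/2)·‖A‖ ≤ r_q(A) ≤ ‖A‖` for every bounded operator `A`; in particular the `q`-numerical
radius is a norm equivalent to the operator norm. -/
theorem statement3 {E : Type*} [NormedAddCommGroup E] [InnerProductSpace ℂ E]
    [CompleteSpace E] (hdim : 2 ≤ Module.rank ℂ E)
    (q : ℝ) (hq0 : 0 < q) (hq1 : q ≤ 1) (A : E →L[ℂ] E) :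
    (q / 2) * ‖A‖ ≤ rqE q A ∧ rqE q A ≤ ‖A‖ :=
  statement3_general hdim q hq0 hq1 A

end
end

section
/- Fix q with 0 < q ≤ 1 and let H = ℓ²(ℕ, ℂ). A bounded linear operator A on H belongs to the saturated unitary orbit SU(C_q) if and only if there exist vectors x, y ∈ H with ‖x‖ = ‖y‖ = 1 and |⟨x, y⟩| = q such that A = x ⊗ y*. (Equivalently: A is a rank-one operator with Hilbert–Schmidt norm 1 whose trace has modulus q, since for A = x ⊗ y* one has tr A = ⟨x, y⟩ and ‖A‖₂ = ‖x‖·‖y‖.) -/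
/-!
Conjugating `C_q = e₀ ⊗ w*`, `w = q e₀ + √(1 - q²) e₁`, by a unitary `U` gives
`(U* e₀) ⊗ (U* w)*`, and `U*` preserves norms and inner products. Conversely, for unit vectors
`x, y` with `|⟨x, y⟩| = q` choose a unimodular `μ` with `⟨y, μ x⟩ = q = ⟨w, e₀⟩`: the pairs
`(e₀, w)` and `(μ x, y)` then have the same Gram matrix, and two pairs of vectors with the same
Gram matrix are related by a unitary. The latter is built from a phase rotation of a line
followed by a Householder reflection, applied first to the first vectors and then to the
components of the second vectors orthogonal to them.
-/

open scoped ComplexConjugate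

noncomputable section

/-- `H = ℓ²(ℕ, ℂ)`. -/
abbrev H : Type := lp (fun _ : ℕ => ℂ) 2

/-- Entrywise complex conjugation on `ℓ²(ℕ, ℂ)`: `(J x) n = conj (x n)`. -/
def J : H → H := fun x => star x

theorem J_apply (x : H) (n : ℕ) : (J x) n = conj (x n) := rfl

/-- The complex-linear bounded operator `J ∘ A ∘ J`. -/
def conjOp (A : H →L[ℂ] H) : H →L[ℂ] H :=
  LinearMap.mkContinuous
    { toFun := fun x => J (A (J x))
      map_add' := by intro x y; simp [J, star_add]
      map_smul' := by intro c x; simp [J, star_smul] }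
    ‖A‖
    (by
      intro x
      simp only [LinearMap.coe_mk, AddHom.coe_mk, J, norm_star]
      calc ‖A (star x)‖ ≤ ‖A‖ * ‖star x‖ := A.le_opNorm _
        _ = ‖A‖ * ‖x‖ := by rw [norm_star])

theorem conjOp_apply (A : H →L[ℂ] H) (x : H) : conjOp A x = J (A (J x)) := rfl

/-- The `q`-numerical radius.  The paper's inner product `⟨·,·⟩` is linear in the
first argument, while Mathlib's `inner x y` is linear in `y`; hence the paper's
`⟨x, y⟩` is `inner y x` below. -/
def rq (q : ℝ) (A : H →L[ℂ] H) : ℝ :=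
  sSup { r : ℝ | ∃ x y : H, ‖x‖ = 1 ∧ ‖y‖ = 1 ∧ (inner ℂ y x : ℂ) = (q : ℂ) ∧
    r = ‖(inner ℂ y (A x) : ℂ)‖ }

/-- The standard orthonormal basis of `ℓ²(ℕ, ℂ)`. -/
def e (n : ℕ) : H := lp.single 2 n (1 : ℂ)

/-- The rank-one operator `x ⊗ y* : v ↦ ⟨v, y⟩ • x` (paper convention, so in
Mathlib notation `v ↦ (inner y v) • x`). -/
def rankOneOp (x y : H) : H →L[ℂ] H := (innerSL ℂ y).smulRight x

theorem rankOneOp_apply (x y v : H) : rankOneOp x y v = (inner ℂ y v : ℂ) • x := rfl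

/-- The operator `C_q : x ↦ (q·⟨x, e₀⟩ + √(1 − q²)·⟨x, e₁⟩) • e₀`. -/
def Cq (q : ℝ) : H →L[ℂ] H :=
  rankOneOp (e 0) ((q : ℂ) • e 0 + (Real.sqrt (1 - q ^ 2) : ℂ) • e 1)

/-- The saturated unitary orbit `SU(C_q) = {λ · U* C_q U : |λ| = 1, U unitary}`. -/
def SUorbit (q : ℝ) : Set (H →L[ℂ] H) :=
  { T | ∃ (lam : ℂ) (U : H →L[ℂ] H), ‖lam‖ = 1 ∧ U ∈ unitary (H →L[ℂ] H) ∧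
      T = lam • (star U ∘L Cq q ∘L U) }

/-- The Hilbert–Schmidt norm `‖T‖₂ = (∑ₙ ‖T eₙ‖²)^{1/2}`. -/
def hsNorm (T : H →L[ℂ] H) : ℝ := Real.sqrt (∑' n : ℕ, ‖T (e n)‖ ^ 2)

open InnerProductSpace ContinuousLinearMap Submodule

section HilbertSpace

variable {E : Type*} [NormedAddCommGroup E] [InnerProductSpace ℂ E] [CompleteSpace E]

theorem IsStarProjection.one_add_smul_mem_unitary {R : Type*} [Ring R] [StarRing R]
    [Algebra ℂ R] [StarModule ℂ R] {p : R} (hp : IsStarProjection p) {μ : ℂ} (hμ : ‖μ‖ = 1) :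
    1 + (μ - 1) • p ∈ unitary R := by
  have key : ∀ c d : ℂ, c * d = 1 → (1 + (c - 1) • p) * (1 + (d - 1) • p) = 1 := by
    intro c d hcd
    simp only [add_mul, mul_add, one_mul, mul_one, smul_mul_smul, hp.isIdempotentElem.eq]
    rw [add_assoc, ← add_smul, ← add_smul, show c - 1 + (d - 1 + (c - 1) * (d - 1)) = 0 by
      linear_combination hcd, zero_smul, add_zero]
  have hμμ : conj μ * μ = 1 := by rw [Complex.conj_mul', hμ]; norm_num
  rw [Unitary.mem_iff, star_add, star_one, star_smul, hp.isSelfAdjoint.star_eq, star_sub,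
    star_one]
  exact ⟨key _ _ hμμ, key _ _ (by rwa [mul_comm])⟩

theorem Submodule.reflection_sub_of_inner_eq {𝕜 F : Type*} [RCLike 𝕜]
    [NormedAddCommGroup F] [InnerProductSpace 𝕜 F] {v w : F} (h : ‖v‖ = ‖w‖)
    (h' : inner 𝕜 v w = inner 𝕜 w v) : reflection (𝕜 ∙ (v - w))ᗮ v = w := by
  set R : F ≃ₗᵢ[𝕜] F := reflection (𝕜 ∙ (v - w))ᗮ
  have h₁ : R (v - w) = -(v - w) := reflection_orthogonalComplement_singleton_eq_neg (v - w)
  have h₂ : R (v + w) = v + w := by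
    apply reflection_mem_subspace_eq_self
    rw [Submodule.mem_orthogonal_singleton_iff_inner_right, inner_sub_left, inner_add_right,
      inner_add_right, inner_self_eq_norm_sq_to_K, inner_self_eq_norm_sq_to_K, h, h']
    ring
  have h₃ : (2 : 𝕜) • R v = (2 : 𝕜) • w := by
    rw [two_smul, two_smul]
    calc R v + R v = R (v + w) + R (v - w) := by rw [map_add, map_sub]; abel
      _ = w + w := by rw [h₁, h₂]; abel
  exact smul_right_injective F two_ne_zero h₃

theorem exists_mem_unitary_apply_eq_of_norm_eq {a b : E} (h : ‖a‖ = ‖b‖) :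
    ∃ U ∈ unitary (E →L[ℂ] E), U a = b ∧ ∀ x, ⟪a, x⟫_ℂ = 0 → ⟪b, x⟫_ℂ = 0 → U x = x := by
  set μ : ℂ := Complex.exp (Complex.arg ⟪a, b⟫_ℂ * Complex.I)
  have hμ : ‖μ‖ = 1 := Complex.norm_exp_ofReal_mul_I _
  have hμab : ⟪μ • a, b⟫_ℂ = ‖⟪a, b⟫_ℂ‖ := by
    have hpolar : (‖⟪a, b⟫_ℂ‖ : ℂ) * μ = ⟪a, b⟫_ℂ := Complex.norm_mul_exp_arg_mul_I _
    rw [inner_smul_left, ← hpolar, mul_left_comm, Complex.conj_mul']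
    simp [hμ]
  set D : E →L[ℂ] E := 1 + (μ - 1) • (ℂ ∙ a).starProjection
  -- `⟪μ • a, b⟫_ℂ` is real, so the reflection in `(μ • a - b)ᗮ` sends `μ • a` to `b`.
  set R := reflection (ℂ ∙ (μ • a - b))ᗮ
  have hD : D ∈ unitary (E →L[ℂ] E) := isStarProjection_starProjection.one_add_smul_mem_unitary hμ
  have hR : (R : E →L[ℂ] E) ∈ unitary (E →L[ℂ] E) := (Unitary.linearIsometryEquiv.symm R).2
  refine ⟨R * D, mul_mem hR hD, ?_, fun x hax hbx => ?_⟩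
  · have hDa : D a = μ • a := by
      simp [D, starProjection_eq_self_iff.mpr (mem_span_singleton_self a)]
      module
    show R (D a) = b
    rw [hDa]
    refine reflection_sub_of_inner_eq (by rw [norm_smul, hμ, one_mul, h]) ?_
    rw [← inner_conj_symm b, hμab, Complex.conj_ofReal]
  · have hDx : D x = x := by
      simp [D, (starProjection_apply_eq_zero_iff _).mpr
        (mem_orthogonal_singleton_iff_inner_right.mpr hax)]
    show R (D x) = x
    rw [hDx]
    refine reflection_mem_subspace_eq_self (mem_orthogonal_singleton_iff_inner_right.mpr ?_)
    rw [inner_sub_left, inner_smul_left, hax, hbx, mul_zero, sub_zero]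

theorem exists_mem_unitary_apply_eq_apply_eq {a a' b b' : E} (ha : ‖a‖ = ‖b‖)
    (ha' : ‖a'‖ = ‖b'‖) (h : ⟪a, a'⟫_ℂ = ⟪b, b'⟫_ℂ) :
    ∃ U ∈ unitary (E →L[ℂ] E), U a = b ∧ U a' = b' := by
  obtain ⟨U₁, hU₁, hU₁a, -⟩ := exists_mem_unitary_apply_eq_of_norm_eq ha
  set c := U₁ a'
  have hc : ‖c‖ = ‖b'‖ := by rw [norm_map_of_mem_unitary hU₁, ha']
  have hbc : ⟪b, c⟫_ℂ = ⟪b, b'⟫_ℂ := by rw [← h, ← hU₁a, inner_map_map_of_mem_unitary hU₁]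
  -- `U₁ a'` and `b'` have the same component along `b`; move their components orthogonal
  -- to `b`, which have equal norms, by a unitary fixing `ℂ ∙ b`.
  set K := ℂ ∙ b
  have hPc : K.starProjection c = K.starProjection b' := by
    rw [starProjection_singleton, starProjection_singleton, hbc]
  have hQc : ‖Kᗮ.starProjection c‖ = ‖Kᗮ.starProjection b'‖ := by
    have hc' := norm_sq_eq_add_norm_sq_starProjection c K
    rw [hc, hPc, norm_sq_eq_add_norm_sq_starProjection b' K, add_right_inj] at hc'
    exact ((sq_eq_sq₀ (norm_nonneg _) (norm_nonneg _)).mp hc').symm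
  obtain ⟨U₂, hU₂, hU₂c, hU₂fix⟩ := exists_mem_unitary_apply_eq_of_norm_eq hQc
  have hU₂K : ∀ x ∈ K, U₂ x = x := fun x hx => hU₂fix x
    (inner_left_of_mem_orthogonal hx (starProjection_apply_mem _ _))
    (inner_left_of_mem_orthogonal hx (starProjection_apply_mem _ _))
  refine ⟨U₂ * U₁, mul_mem hU₂ hU₁, ?_, ?_⟩
  · show U₂ (U₁ a) = b
    rw [hU₁a, hU₂K b (mem_span_singleton_self b)]
  · show U₂ c = b'
    rw [← starProjection_add_starProjection_orthogonal (K := K) c, map_add,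
      hU₂K _ (starProjection_apply_mem _ _), hU₂c, hPc,
      starProjection_add_starProjection_orthogonal]

theorem star_comp_rankOne_comp (U : E →L[ℂ] E) (x y : E) :
    star U ∘L rankOne ℂ x y ∘L U = rankOne ℂ (star U x) (star U y) := by
  rw [rankOne_comp, comp_rankOne, star_eq_adjoint]

end HilbertSpace

theorem inner_e (m n : ℕ) : ⟪e m, e n⟫_ℂ = if m = n then 1 else 0 := by
  rw [e, e, lp.inner_single_left, lp.single_apply]
  split_ifs with h
  · subst h; simp
  · simp [Pi.single_eq_of_ne h]

theorem norm_e (n : ℕ) : ‖e n‖ = 1 := by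
  simp [e, lp.norm_single]

def cqVec (q : ℝ) : H := (q : ℂ) • e 0 + (Real.sqrt (1 - q ^ 2) : ℂ) • e 1

theorem Cq_eq_rankOne (q : ℝ) : Cq q = rankOne ℂ (e 0) (cqVec q) := rfl

theorem inner_e_zero_cqVec (q : ℝ) : ⟪e 0, cqVec q⟫_ℂ = q := by
  simp [cqVec, inner_e, norm_e]

theorem norm_cqVec {q : ℝ} (hq : q ^ 2 ≤ 1) : ‖cqVec q‖ = 1 := by
  have horth : ⟪(q : ℂ) • e 0, (Real.sqrt (1 - q ^ 2) : ℂ) • e 1⟫_ℂ = 0 := by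
    simp [inner_e]
  have hsq := norm_add_sq_eq_norm_sq_add_norm_sq_of_inner_eq_zero _ _ horth
  rw [← cqVec, norm_smul, norm_smul, norm_e, norm_e, Complex.norm_real, Complex.norm_real,
    Real.norm_eq_abs, Real.norm_eq_abs, abs_of_nonneg (Real.sqrt_nonneg _)] at hsq
  have hβ := Real.sq_sqrt (show 0 ≤ 1 - q ^ 2 by linarith)
  nlinarith [sq_abs q, norm_nonneg (cqVec q)]

theorem smul_star_comp_Cq_comp (q : ℝ) (lam : ℂ) (U : H →L[ℂ] H) :
    lam • (star U ∘L Cq q ∘L U) = rankOneOp (lam • star U (e 0)) (star U (cqVec q)) := by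
  rw [Cq_eq_rankOne, star_comp_rankOne_comp]
  ext v
  simp [rankOneOp_apply, smul_smul, mul_comm]

theorem exists_eq_rankOneOp_of_mem_SUorbit {q : ℝ} (hq0 : 0 ≤ q) (hq : q ^ 2 ≤ 1)
    {A : H →L[ℂ] H} (hA : A ∈ SUorbit q) :
    ∃ x y : H, ‖x‖ = 1 ∧ ‖y‖ = 1 ∧ ‖⟪y, x⟫_ℂ‖ = q ∧ A = rankOneOp x y := by
  obtain ⟨lam, U, hlam, hU, rfl⟩ := hA
  have hU' := Unitary.star_mem hU
  refine ⟨lam • star U (e 0), star U (cqVec q), ?_, ?_, ?_, smul_star_comp_Cq_comp q lam U⟩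
  · rw [norm_smul, hlam, norm_map_of_mem_unitary hU', norm_e, one_mul]
  · rw [norm_map_of_mem_unitary hU', norm_cqVec hq]
  · rw [inner_smul_right, inner_map_map_of_mem_unitary hU', norm_mul, hlam, one_mul,
      norm_inner_symm, inner_e_zero_cqVec, Complex.norm_real, Real.norm_of_nonneg hq0]

theorem rankOneOp_mem_SUorbit {q : ℝ} (hq0 : 0 < q) (hq : q ^ 2 ≤ 1) {x y : H}
    (hx : ‖x‖ = 1) (hy : ‖y‖ = 1) (hxy : ‖⟪x, y⟫_ℂ‖ = q) : rankOneOp x y ∈ SUorbit q := by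
  set μ : ℂ := ⟪x, y⟫_ℂ / q
  have hμ : ‖μ‖ = 1 := by
    rw [norm_div, hxy, Complex.norm_real, Real.norm_of_nonneg hq0.le, div_self hq0.ne']
  have hμxy : ⟪μ • x, y⟫_ℂ = q := by
    rw [inner_smul_left, map_div₀, Complex.conj_ofReal, div_mul_eq_mul_div, Complex.conj_mul',
      hxy]
    field_simp
  obtain ⟨V, hV, hV0, hVw⟩ := exists_mem_unitary_apply_eq_apply_eq (b := μ • x) (b' := y)
    (by rw [norm_e 0, norm_smul, hμ, hx, one_mul]) (by rw [norm_cqVec hq, hy])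
    (by rw [inner_e_zero_cqVec, hμxy])
  refine ⟨conj μ, star V, by rw [RCLike.norm_conj, hμ], Unitary.star_mem hV, ?_⟩
  rw [smul_star_comp_Cq_comp, star_star, hV0, hVw, smul_smul, Complex.conj_mul', hμ]
  simp

/-- A bounded operator on `ℓ²(ℕ, ℂ)` belongs to the saturated unitary orbit
`SU(C_q)` iff it equals `x ⊗ y*` for unit vectors `x, y` with `|⟨x, y⟩| = q`. -/
theorem statement5 (q : ℝ) (hq0 : 0 < q) (hq1 : q ≤ 1) (A : H →L[ℂ] H) :
    A ∈ SUorbit q ↔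
      ∃ x y : H, ‖x‖ = 1 ∧ ‖y‖ = 1 ∧ ‖(inner ℂ y x : ℂ)‖ = q ∧ A = rankOneOp x y := by
  have hq : q ^ 2 ≤ 1 := pow_le_one₀ hq0.le hq1
  refine ⟨exists_eq_rankOneOp_of_mem_SUorbit hq0.le hq, ?_⟩
  rintro ⟨x, y, hx, hy, hxy, rfl⟩
  exact rankOneOp_mem_SUorbit hq0 hq hx hy (by rwa [norm_inner_symm])

end
end

section
/- Let H be a complex Hilbert space and k ∈ ℕ. Let ι be an index type, F a nontrivial filter on ι, (S_i)_{i ∈ ι} a family of bounded linear operators on H each of rank at most k, and T a bounded linear operator on H such that for every x ∈ H, S_i x converges to T x along F. Then T has rank at most k. (That is, the set of bounded operators of rank ≤ k is closed in the strong operator topology.) -/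
/-- On a complex Hilbert space, the set of bounded operators of rank at
most `k` is closed in the strong operator topology: if `S i x → T x` along a nontrivial
filter `F` for every `x`, and every `S i` has rank at most `k`, then `T` has rank at
most `k`. -/
theorem statement6 {E : Type*} [NormedAddCommGroup E] [InnerProductSpace ℂ E]
    [CompleteSpace E] (k : ℕ) {ι : Type*} (F : Filter ι) [F.NeBot]
    (S : ι → E →L[ℂ] E) (T : E →L[ℂ] E)
    (hrank : ∀ i, LinearMap.rank (S i : E →ₗ[ℂ] E) ≤ k)
    (hconv : ∀ x : E, Filter.Tendsto (fun i => S i x) F (nhds (T x))) :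
    LinearMap.rank (T : E →ₗ[ℂ] E) ≤ k := by
  by_contra h
  push_neg at h
  have hk1 : ((k + 1 : ℕ) : Cardinal) ≤ LinearMap.rank (T : E →ₗ[ℂ] E) := by
    exact_mod_cast Cardinal.natCast_add_one_le_iff.mpr h
  obtain ⟨s, hs, hind⟩ := LinearMap.le_rank_iff_exists_linearIndependent_finset.mp hk1
  -- the tuple of images is in the open set of linearly independent tuples
  have hopen : IsOpen {f : ↥(s : Set E) → E | LinearIndependent ℂ f} :=
    isOpen_setOf_linearIndependent
  have htend : Filter.Tendsto (fun i => fun x : (s : Set E) => S i x) F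
      (nhds (fun x : (s : Set E) => T x)) := by
    rw [tendsto_pi_nhds]
    exact fun x => hconv x
  have hev : ∀ᶠ i in F, LinearIndependent ℂ fun x : (s : Set E) => S i x :=
    htend.eventually (hopen.mem_nhds hind)
  obtain ⟨i, hi⟩ := hev.exists
  have : ((k + 1 : ℕ) : Cardinal) ≤ LinearMap.rank (S i : E →ₗ[ℂ] E) :=
    LinearMap.le_rank_iff_exists_linearIndependent_finset.mpr ⟨s, hs, hi⟩
  have := this.trans (hrank i)
  exact absurd (by exact_mod_cast this) (by omega)
end

section
/- Let H = ℓ²(ℕ, ℂ) and let R be a bounded linear operator on H of rank exactly two. Let 𝔄(R) = { A : A is a rank-one bounded operator on H and R = A + B for some rank-one bounded operator B }. Then the real linear span of 𝔄(R) has dimension 7 over ℝ; in particular, for any subset of 𝔄(R) its real span has dimension at most 7. -/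
/-!
If `R = A + B` with `A`, `B` of rank one and `R` of rank two, then `range R = range A ⊕ range B`,
so `A` and `B` take values in `W = range R` and vanish on `ker R`. Hence `A = T ∘ R` for a unique
`T ∈ End W`, and `𝔄(R)` corresponds to the `T` with `rank T = rank (1 - T) = 1`: the rank-one
idempotents of the plane `W`. These have trace one, and their real span is the whole real
hyperplane `Im (tr T) = 0` of the `8`-dimensional real space `End W`.
-/

noncomputable section

open Module LinearMap Submodule

theorem Submodule.finrank_span_image_of_injective {K M N : Type*} [Ring K] [AddCommGroup M]
    [Module K M] [AddCommGroup N] [Module K N] {f : M →ₗ[K] N} (hf : Function.Injective f)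
    (s : Set M) : finrank K (span K (f '' s)) = finrank K (span K s) := by
  rw [span_image]
  exact (equivMapOfInjective f hf _).finrank_eq.symm

namespace LinearMap

section DivisionRing

variable {K V V' : Type*} [DivisionRing K] [AddCommGroup V] [Module K V] [AddCommGroup V']
  [Module K V'] {A B : V →ₗ[K] V'} [FiniteDimensional K (range A)] [FiniteDimensional K (range B)]

theorem range_add_eq_sup_of_finrank_add_le
    (h : finrank K (range A) + finrank K (range B) ≤ finrank K (range (A + B))) :
    range (A + B) = range A ⊔ range B := by
  refine eq_of_le_of_finrank_le (range_add_le A B) ?_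
  have := finrank_sup_add_finrank_inf_eq (range A) (range B)
  omega

theorem disjoint_range_of_finrank_add_le
    (h : finrank K (range A) + finrank K (range B) ≤ finrank K (range (A + B))) :
    Disjoint (range A) (range B) := by
  have hsum := finrank_sup_add_finrank_inf_eq (range A) (range B)
  have hle : finrank K (range (A + B)) ≤ finrank K ↥(range A ⊔ range B) :=
    finrank_mono (range_add_le A B)
  rw [disjoint_iff, ← finrank_eq_zero]
  omega

end DivisionRing

theorem ker_add_le_ker_left {R V V' : Type*} [Ring R] [AddCommGroup V] [Module R V]
    [AddCommGroup V'] [Module R V'] {A B : V →ₗ[R] V'} (h : Disjoint (range A) (range B)) :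
    ker (A + B) ≤ ker A := by
  intro v hv
  have hAB : A v = -B v := eq_neg_of_add_eq_zero_left hv
  exact (disjoint_def.mp h) (A v) (mem_range_self A v) (hAB ▸ neg_mem (mem_range_self B v))

section RangeEndLift

variable {R V V' : Type*} [CommRing R] [AddCommGroup V] [Module R V] [AddCommGroup V']
  [Module R V'] (f : V →ₗ[R] V')

def rangeEndLift : Module.End R (range f) →ₗ[R] (V →ₗ[R] V') where
  toFun T := (range f).subtype ∘ₗ T ∘ₗ f.rangeRestrict
  map_add' _ _ := by ext; simp
  map_smul' _ _ := by ext; simp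

@[simp]
theorem rangeEndLift_apply (T : Module.End R (range f)) (v : V) :
    f.rangeEndLift T v = T (f.rangeRestrict v) := rfl

@[simp]
theorem rangeEndLift_one : f.rangeEndLift 1 = f := by ext; simp

theorem rangeEndLift_injective : Function.Injective f.rangeEndLift := by
  intro S T h
  ext ⟨_, v, rfl⟩
  exact congr($h v)

theorem range_rangeEndLift (T : Module.End R (range f)) :
    range (f.rangeEndLift T) = (range T).map (range f).subtype := by
  simp [rangeEndLift, range_comp, range_rangeRestrict]

theorem exists_rangeEndLift_eq {A : V →ₗ[R] V'} (hrange : range A ≤ range f)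
    (hker : ker f ≤ ker A) : ∃ T, f.rangeEndLift T = A := by
  refine ⟨(ker f).liftQ (A.codRestrict (range f) fun v => hrange (mem_range_self A v))
    (by simpa [ker_codRestrict] using hker) ∘ₗ f.quotKerEquivRange.symm.toLinearMap, ?_⟩
  ext v
  have hv : f.rangeRestrict v = ⟨f v, mem_range_self f v⟩ := rfl
  simp only [comp_apply, rangeEndLift_apply, hv, LinearEquiv.coe_coe,
    quotKerEquivRange_symm_apply_image]
  rfl

end RangeEndLift

section Field

variable {K V V' : Type*} [Field K] [AddCommGroup V] [Module K V] [AddCommGroup V'] [Module K V']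

theorem rank_rangeEndLift (f : V →ₗ[K] V') (T : Module.End K (range f)) :
    rank (f.rangeEndLift T) = rank T := by
  rw [LinearMap.rank, range_rangeEndLift, rank_map_eq (range f).injective_subtype]

theorem exists_rangeEndLift_eq_of_rank_eq_one {A B : V →ₗ[K] V'} (hA : rank A = 1)
    (hB : rank B = 1) (hAB : rank (A + B) = 2) :
    ∃ T, rank T = 1 ∧ rank (1 - T) = 1 ∧ (A + B).rangeEndLift T = A := by
  have : FiniteDimensional K (range A) := finite_of_rank_eq_one hA
  have : FiniteDimensional K (range B) := finite_of_rank_eq_one hB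
  have hfinrank : finrank K (range A) + finrank K (range B) ≤ finrank K (range (A + B)) := by
    rw [finrank_eq_of_rank_eq hA, finrank_eq_of_rank_eq hB, finrank_eq_of_rank_eq hAB]
  obtain ⟨T, hT⟩ := (A + B).exists_rangeEndLift_eq
    (le_sup_left.trans_eq (range_add_eq_sup_of_finrank_add_le hfinrank).symm)
    (ker_add_le_ker_left (disjoint_range_of_finrank_add_le hfinrank))
  have hT' : (A + B).rangeEndLift (1 - T) = B := by
    rw [map_sub, rangeEndLift_one, hT, add_sub_cancel_left]
  refine ⟨T, ?_, ?_, hT⟩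
  · rw [← rank_rangeEndLift (A + B), hT, hA]
  · rw [← rank_rangeEndLift (A + B), hT', hB]

variable [CharZero K] {W : Type*} [AddCommGroup W] [Module K W]

theorem IsIdempotentElem.rank_eq_one_iff_trace_eq_one [FiniteDimensional K W]
    {T : Module.End K W} (hT : IsIdempotentElem T) : rank T = 1 ↔ trace K W T = 1 := by
  rw [LinearMap.rank, rank_eq_one_iff_finrank_eq_one, (IsIdempotentElem.isProj_range T hT).trace,
    Nat.cast_eq_one]

theorem rank_eq_one_and_rank_one_sub_eq_one_iff (hW : finrank K W = 2) {T : Module.End K W} :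
    rank T = 1 ∧ rank (1 - T) = 1 ↔ IsIdempotentElem T ∧ trace K W T = 1 := by
  have : FiniteDimensional K W := .of_finrank_pos (by omega)
  constructor
  · rintro ⟨hT, hT'⟩
    have hdisj : Disjoint (range T) (range (1 - T)) := by
      rw [LinearMap.rank, rank_eq_one_iff_finrank_eq_one] at hT hT'
      apply disjoint_range_of_finrank_add_le
      rw [hT, hT', add_sub_cancel, Module.End.one_eq_id, range_id, finrank_top, hW]
    have hidem : IsIdempotentElem T := by
      have hzero : T * (1 - T) = 0 := by
        ext v
        have hcomm : (1 - T) (T v) = T ((1 - T) v) := by simp [sub_apply]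
        exact (disjoint_def.mp hdisj) _ (mem_range_self T _) ⟨T v, hcomm⟩
      rw [mul_sub, mul_one, sub_eq_zero] at hzero
      exact hzero.symm
    exact ⟨hidem, hidem.rank_eq_one_iff_trace_eq_one.mp hT⟩
  · rintro ⟨hidem, htr⟩
    refine ⟨hidem.rank_eq_one_iff_trace_eq_one.mpr htr,
      hidem.one_sub.rank_eq_one_iff_trace_eq_one.mpr ?_⟩
    rw [map_sub, htr, trace_one, hW]
    norm_num

end Field

end LinearMap

namespace Matrix

open Complex

theorem isIdempotentElem_of_trace_eq_one_of_det_eq_zero {R : Type*} [CommRing R]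
    [Nontrivial R] {N : Matrix (Fin 2) (Fin 2) R} (htr : N.trace = 1) (hdet : N.det = 0) :
    IsIdempotentElem N := by
  have h := aeval_self_charpoly N
  rw [charpoly_fin_two, htr, hdet] at h
  simp only [map_one, one_mul, map_zero, add_zero, map_sub, map_pow, Polynomial.aeval_X] at h
  rw [IsIdempotentElem, ← sq]
  exact sub_eq_zero.mp h

def imTrace : Matrix (Fin 2) (Fin 2) ℂ →ₗ[ℝ] ℝ :=
  imLm ∘ₗ (traceLinearMap (Fin 2) ℂ ℂ).restrictScalars ℝ

theorem span_isIdempotentElem_trace_eq_one :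
    span ℝ {N : Matrix (Fin 2) (Fin 2) ℂ | IsIdempotentElem N ∧ N.trace = 1} = ker imTrace := by
  set S := {N : Matrix (Fin 2) (Fin 2) ℂ | IsIdempotentElem N ∧ N.trace = 1}
  have mem_S {a b c d : ℂ} (htr : a + d = 1) (hdet : a * d - b * c = 0) : !![a, b; c, d] ∈ S :=
    ⟨isIdempotentElem_of_trace_eq_one_of_det_eq_zero (by simpa [trace_fin_two_of])
      (by simpa [det_fin_two_of]), by simpa [trace_fin_two_of]⟩
  refine le_antisymm (span_le.mpr fun N hN => by simp [imTrace, hN.2]) fun N hN => ?_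
  -- `X - Y = diag(i, -i)` supplies the imaginary parts of the diagonal.
  set X : Matrix (Fin 2) (Fin 2) ℂ := !![(1 + I) / 2, 1; 1 / 2, (1 - I) / 2]
  set Y : Matrix (Fin 2) (Fin 2) ℂ := !![(1 - I) / 2, 1; 1 / 2, (1 + I) / 2]
  have hX : X ∈ S := mem_S (by ring) (by linear_combination (-1 / 4 : ℂ) * I_sq)
  have hY : Y ∈ S := mem_S (by ring) (by linear_combination (-1 / 4 : ℂ) * I_sq)
  have hN' : N = ((N 0 0).re - 2) • !![1, 0; 0, 0] + !![1, N 0 1; 0, 0] + !![1, 0; N 1 0, 0]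
      + (N 1 1).re • !![0, 0; 0, 1] + (N 0 0).im • (X - Y) := by
    have him : (N 0 0).im + (N 1 1).im = 0 := by simpa [imTrace, trace_fin_two] using hN
    ext i j
    fin_cases i <;> fin_cases j <;> apply Complex.ext <;> simp [X, Y] <;> linarith
  rw [hN']
  refine add_mem (add_mem (add_mem (add_mem ?_ ?_) ?_) ?_) ?_
  · exact smul_mem _ _ (subset_span (mem_S (by ring) (by ring)))
  · exact subset_span (mem_S (by ring) (by ring))
  · exact subset_span (mem_S (by ring) (by ring))
  · exact smul_mem _ _ (subset_span (mem_S (by ring) (by ring)))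
  · exact smul_mem _ _ (sub_mem (subset_span hX) (subset_span hY))

theorem finrank_ker_imTrace : finrank ℝ (ker imTrace) = 7 := by
  have hsurj : range imTrace = ⊤ := by
    refine range_eq_top.mpr fun r => ⟨!![r * I, 0; 0, 0], ?_⟩
    simp [imTrace, trace_fin_two_of]
  have := imTrace.finrank_range_add_finrank_ker
  rw [hsurj, finrank_top, finrank_matrix, Complex.finrank_real_complex] at this
  simp at this
  omega

end Matrix

theorem finrank_span_isIdempotentElem_trace_eq_one {W : Type*} [AddCommGroup W] [Module ℂ W]
    (hW : finrank ℂ W = 2) :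
    finrank ℝ (span ℝ {T : Module.End ℂ W | IsIdempotentElem T ∧ trace ℂ W T = 1}) = 7 := by
  have : FiniteDimensional ℂ W := .of_finrank_pos (by omega)
  let b := finBasisOfFinrankEq ℂ W hW
  let e := toMatrixAlgEquiv b
  have hpreimage : {T | IsIdempotentElem T ∧ trace ℂ W T = 1} =
      e ⁻¹' {N | IsIdempotentElem N ∧ N.trace = 1} := by
    ext T
    simp only [Set.mem_ofPred_eq, Set.mem_preimage, IsIdempotentElem, ← map_mul,
      e.injective.eq_iff, trace_eq_matrix_trace ℂ b T]
    rfl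
  calc finrank ℝ (span ℝ {T | IsIdempotentElem T ∧ trace ℂ W T = 1})
      = finrank ℝ (span ℝ (e '' {T | IsIdempotentElem T ∧ trace ℂ W T = 1})) :=
        (finrank_span_image_of_injective (f := e.toLinearMap.restrictScalars ℝ) e.injective _).symm
    _ = 7 := by
        rw [hpreimage, Set.image_preimage_eq _ e.surjective,
          Matrix.span_isIdempotentElem_trace_eq_one, Matrix.finrank_ker_imTrace]

namespace ContinuousLinearMap

@[simp]
theorem coe_coeLM {R S M N : Type*} [Semiring R] [Semiring S] [TopologicalSpace M]
    [AddCommMonoid M] [Module R M] [TopologicalSpace N] [AddCommMonoid N] [Module R N]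
    [Module S N] [SMulCommClass R S N] [ContinuousConstSMul S N] [ContinuousAdd N] :
    ⇑(coeLM S : (M →L[R] N) →ₗ[S] M →ₗ[R] N) = (↑) := rfl

variable {𝕜 E : Type*} [NontriviallyNormedField 𝕜] [NormedAddCommGroup E] [NormedSpace 𝕜 E]

def rankOneSummands (R : E →L[𝕜] E) : Set (E →L[𝕜] E) :=
  {A | LinearMap.rank (A : E →ₗ[𝕜] E) = 1 ∧
    ∃ B : E →L[𝕜] E, LinearMap.rank (B : E →ₗ[𝕜] E) = 1 ∧ R = A + B}

variable [CompleteSpace 𝕜]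

theorem continuous_rangeEndLift (R : E →L[𝕜] E) [FiniteDimensional 𝕜 (range (R : E →ₗ[𝕜] E))]
    (T : Module.End 𝕜 (range (R : E →ₗ[𝕜] E))) :
    Continuous ((R : E →ₗ[𝕜] E).rangeEndLift T) :=
  continuous_subtype_val.comp <| T.continuous_of_finiteDimensional.comp <|
    R.continuous.subtype_mk _

theorem image_coe_rankOneSummands (R : E →L[𝕜] E) (hR : LinearMap.rank (R : E →ₗ[𝕜] E) = 2) :
    (↑) '' R.rankOneSummands = (R : E →ₗ[𝕜] E).rangeEndLift ''
      {T | LinearMap.rank T = 1 ∧ LinearMap.rank (1 - T) = 1} := by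
  apply Set.Subset.antisymm
  · rintro _ ⟨A, ⟨hA, B, hB, rfl⟩, rfl⟩
    obtain ⟨T, hT, hT', hTA⟩ := exists_rangeEndLift_eq_of_rank_eq_one hA hB hR
    exact ⟨T, ⟨hT, hT'⟩, hTA⟩
  · rintro _ ⟨T, ⟨hT, hT'⟩, rfl⟩
    have : FiniteDimensional 𝕜 (range (R : E →ₗ[𝕜] E)) := finite_of_rank_eq_nat hR
    let A : E →L[𝕜] E := ⟨_, R.continuous_rangeEndLift T⟩
    have hB : ((R - A : E →L[𝕜] E) : E →ₗ[𝕜] E) = (R : E →ₗ[𝕜] E).rangeEndLift (1 - T) := by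
      rw [map_sub, rangeEndLift_one]; rfl
    refine ⟨A, ⟨?_, R - A, ?_, (add_sub_cancel A R).symm⟩, rfl⟩
    · rw [← hT]; exact rank_rangeEndLift _ T
    · rw [hB, rank_rangeEndLift, hT']

end ContinuousLinearMap

/-- If `R` is a bounded operator on `ℓ²(ℕ, ℂ)` of rank exactly two, then
the real linear span of `𝔄(R) = {A rank one : R = A + B for some rank-one B}` has
dimension `7` over `ℝ` (so any subset of `𝔄(R)` spans real dimension at most `7`). -/
theorem statement13 (R : H →L[ℂ] H) (hR : LinearMap.rank (R : H →ₗ[ℂ] H) = 2) :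
    Module.finrank ℝ
      ↥(Submodule.span ℝ
        {A : H →L[ℂ] H | LinearMap.rank (A : H →ₗ[ℂ] H) = 1 ∧
          ∃ B : H →L[ℂ] H, LinearMap.rank (B : H →ₗ[ℂ] H) = 1 ∧ R = A + B}) = 7 := by
  have hW : finrank ℂ (range (R : H →ₗ[ℂ] H)) = 2 := finrank_eq_of_rank_eq hR
  have hcoe : Function.Injective (ContinuousLinearMap.coeLM ℝ : (H →L[ℂ] H) →ₗ[ℝ] H →ₗ[ℂ] H) :=
    ContinuousLinearMap.coe_injective
  change finrank ℝ (span ℝ R.rankOneSummands) = 7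
  rw [← finrank_span_image_of_injective hcoe, ContinuousLinearMap.coe_coeLM,
    R.image_coe_rankOneSummands hR]
  refine (finrank_span_image_of_injective
    (f := (R : H →ₗ[ℂ] H).rangeEndLift.restrictScalars ℝ) (rangeEndLift_injective _) _).trans ?_
  rw [Set.ext fun T => rank_eq_one_and_rank_one_sub_eq_one_iff hW]
  exact finrank_span_isIdempotentElem_trace_eq_one hW
end
end
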